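/- Position can beat number: for every ε > 0 there exist integers c ≥ 1 and N such that for all n ≥ N the game J^c_n satisfies |L(J^c_n)| / |V(J^c_n)| ≤ ε and s^L_2(J^c_n) / |V(J^c_n)| ≥ 1 − ε; that is, the initial proportion of Left vertices is at most ε while, even playing second, Left wins a proportion of at least 1 − ε of all vertices. -/

import Mathlib

namespace Influence

open Finset

/-- A position of the game `influence`: a finite directed graph with vertex set `V`,
arc set `A`, and the set `left` of Left (black) vertices; Right's vertices are `V \ left`. -/
structure Pos (α : Type) [DecidableEq α] where
  V : Finset α
  A : Finset (α × α)
  left : Finset α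

variable {α : Type} [DecidableEq α]

namespace Pos

/-- The set of Right vertices. -/
def R (G : Pos α) : Finset α := G.V \ G.left

/-- Well-formedness: arcs join vertices, and Left vertices are vertices. -/
def WF (G : Pos α) : Prop :=
  (∀ p ∈ G.A, p.1 ∈ G.V ∧ p.2 ∈ G.V) ∧ G.left ⊆ G.V

open Classical in
/-- `Succ G x`: vertices reachable from `x` by a directed path (including `x` itself). -/
noncomputable def Succ (G : Pos α) (x : α) : Finset α :=
  G.V.filter (fun z => Relation.ReflTransGen (fun a b => (a, b) ∈ G.A) x z)

open Classical in
/-- `Pred G y`: vertices from which `y` is reachable by a directed path (including `y`). -/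
noncomputable def Pred (G : Pos α) (y : α) : Finset α :=
  G.V.filter (fun z => Relation.ReflTransGen (fun a b => (a, b) ∈ G.A) z y)

open Classical in
noncomputable def ForcL (G : Pos α) : Finset α :=
  G.left.filter (fun x => G.Succ x ⊆ G.left)

open Classical in
noncomputable def ForcR (G : Pos α) : Finset α :=
  G.R.filter (fun y => G.Pred y ⊆ G.R)

noncomputable def Forc (G : Pos α) : Finset α := G.ForcL ∪ G.ForcR

/-- A relevant position: no forced vertices. -/
def Relevant (G : Pos α) : Prop := G.Forc = ∅

/-- The induced subgraph `G ∖ S` on `V(G) \ S`. -/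
def erase (G : Pos α) (S : Finset α) : Pos α :=
  ⟨G.V \ S, G.A.filter (fun p => p.1 ∈ G.V \ S ∧ p.2 ∈ G.V \ S), G.left \ S⟩

open Classical in
/-- The set of vertices removed when playing `x`:  for `x ∈ L`,
`Rmv(G,x) = Succ(G,x) ∪ Forc(G ∖ Succ(G,x))`; for `y ∈ R`,
`Rmv(G,y) = Pred(G,y) ∪ Forc(G ∖ Pred(G,y))`. -/
noncomputable def Rmv (G : Pos α) (x : α) : Finset α :=
  if x ∈ G.left then G.Succ x ∪ (G.erase (G.Succ x)).Forc
  else G.Pred x ∪ (G.erase (G.Pred x)).Forc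

/-- The resulting relevant position `G_x` after the move `x`. -/
noncomputable def move (G : Pos α) (x : α) : Pos α := G.erase (G.Rmv x)

mutual
/-- Auxiliary (fuel-indexed) score of Left playing first. -/
noncomputable def sL1Aux : ℕ → Pos α → ℕ
  | 0, _ => 0
  | k + 1, G =>
      if G.left.Nonempty then
        G.left.sup (fun x => (G.Rmv x).card + sL2Aux k (G.move x))
      else 0

/-- Auxiliary (fuel-indexed) score of Left playing second. -/
noncomputable def sL2Aux : ℕ → Pos α → ℕ
  | 0, _ => 0
  | k + 1, G =>
      if h : G.R.Nonempty then G.R.inf' h (fun y => sL1Aux k (G.move y))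
      else 0
end

mutual
/-- Auxiliary (fuel-indexed) score of Right playing first. -/
noncomputable def sR1Aux : ℕ → Pos α → ℕ
  | 0, _ => 0
  | k + 1, G =>
      if G.R.Nonempty then
        G.R.sup (fun y => (G.Rmv y).card + sR2Aux k (G.move y))
      else 0

/-- Auxiliary (fuel-indexed) score of Right playing second. -/
noncomputable def sR2Aux : ℕ → Pos α → ℕ
  | 0, _ => 0
  | k + 1, G =>
      if h : G.left.Nonempty then G.left.inf' h (fun x => sR1Aux k (G.move x))
      else 0
end

/-- `s^L_1(G)`: the score of Left when Left plays first (optimal play). -/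
noncomputable def sL1 (G : Pos α) : ℕ := sL1Aux G.V.card G

/-- `s^L_2(G)`: the score of Left when Right plays first (optimal play). -/
noncomputable def sL2 (G : Pos α) : ℕ := sL2Aux G.V.card G

/-- `s^R_1(G)`: the score of Right when Right plays first (optimal play). -/
noncomputable def sR1 (G : Pos α) : ℕ := sR1Aux G.V.card G

/-- `s^R_2(G)`: the score of Right when Left plays first (optimal play). -/
noncomputable def sR2 (G : Pos α) : ℕ := sR2Aux G.V.card G

/-- The Left score `Ls(G) = s^L_1(G) - s^R_2(G)`. -/
noncomputable def Ls (G : Pos α) : ℤ := (G.sL1 : ℤ) - (G.sR2 : ℤ)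

/-- The Right score `Rs(G) = s^L_2(G) - s^R_1(G)`. -/
noncomputable def Rs (G : Pos α) : ℤ := (G.sL2 : ℤ) - (G.sR1 : ℤ)

/-- Disjoint union (game sum) of two positions. -/
def union (G G' : Pos α) : Pos α := ⟨G.V ∪ G'.V, G.A ∪ G'.A, G.left ∪ G'.left⟩

/-- The empty position. -/
protected def empty : Pos α := ⟨∅, ∅, ∅⟩

end Pos

/-- The sum of a finite list of positions. -/
def sumList (l : List (Pos α)) : Pos α := l.foldr Pos.union Pos.empty

open Classical in
/-- `G` is a segment: its vertex set is a set of at least two consecutive integers,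
Left's vertices are the even ones, Right's the odd ones, and there is an arc from each
even vertex to each of its (odd) neighbours `±1` lying in the vertex set. -/
def IsSegment (G : Pos ℤ) : Prop :=
  2 ≤ G.V.card ∧
  (∀ i j k : ℤ, i ∈ G.V → j ∈ G.V → i ≤ k → k ≤ j → k ∈ G.V) ∧
  G.left = G.V.filter (fun n => Even n) ∧
  G.A = (G.V ×ˢ G.V).filter (fun p => Even p.1 ∧ (p.2 = p.1 + 1 ∨ p.2 = p.1 - 1))

/-- `G` is the finite disjoint union (game sum) of the list `l` of segments. -/
def IsSegUnion (G : Pos ℤ) (l : List (Pos ℤ)) : Prop :=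
  (∀ H ∈ l, IsSegment H) ∧
  l.Pairwise (fun H H' => Disjoint H.V H'.V) ∧
  G = sumList l


open Classical in
/-- `G` is an alternated cycle: obtained from a segment `S` with an even number of
vertices by adding the arc `(x, y)` where `x` is the endpoint of `S` in `L` (even) and
`y` the endpoint in `R` (odd). -/
def IsAltCycle (G : Pos ℤ) : Prop :=
  ∃ (S : Pos ℤ) (x y : ℤ), IsSegment S ∧ Even S.V.card ∧
    x ∈ S.V ∧ y ∈ S.V ∧ Even x ∧ ¬ Even y ∧
    (∀ z ∈ S.V, min x y ≤ z ∧ z ≤ max x y) ∧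
    G.V = S.V ∧ G.left = S.left ∧ G.A = insert (x, y) S.A

open Classical in
/-- `T` is (a copy of) the oriented tree `T_n^c`: a rooted tree of depth `n+1`, all arcs
oriented from parent to child, in which every vertex at level `k ≤ n-1` has exactly `3`
children, every vertex at level `n` has exactly `c` children, the leaves (level `n+1`)
are the Right vertices and all other vertices are Left vertices. -/
def IsTnc (n c : ℕ) (T : Pos α) : Prop :=
  T.WF ∧ ∃ lvl : α → ℕ,
    (∀ v ∈ T.V, lvl v ≤ n + 1) ∧
    T.left = T.V.filter (fun v => lvl v ≤ n) ∧
    (∃! r, r ∈ T.V ∧ lvl r = 0) ∧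
    (∀ p ∈ T.A, lvl p.2 = lvl p.1 + 1) ∧
    (∀ v ∈ T.V, 0 < lvl v → ∃! u, (u, v) ∈ T.A) ∧
    (∀ v ∈ T.V, lvl v < n → (T.V.filter (fun w => (v, w) ∈ T.A)).card = 3) ∧
    (∀ v ∈ T.V, lvl v = n → (T.V.filter (fun w => (v, w) ∈ T.A)).card = c)

/-- `J` is (a copy of) `J_n^c`, the disjoint union of two disjoint copies of `T_n^c`. -/
def IsJnc (n c : ℕ) (J : Pos α) : Prop :=
  ∃ T1 T2 : Pos α, IsTnc n c T1 ∧ IsTnc n c T2 ∧ Disjoint T1.V T2.V ∧ J = T1.union T2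

/-!
Left answers each move of Right by taking a whole remaining component of largest depth. Give a
component isomorphic to `T^c_m` the weight `w(m)`, where `w(m + 2) = 2 w(m + 1) + w(m) + 1`. A move
of Right in a component of depth `m` removes a root-to-leaf path and the sibling leaves this
forces off, at most `m + c + 1` vertices, and leaves at most two components of each depth `< m`,
one of them of depth `m - 1`; so Left's reply removes a component of depth at least `m - 1`. The
recurrence is chosen so that, over such a round, Right's gain plus the new total weight is at most
the old total weight. Hence Right wins at most `2 w(n)` vertices of `J^c_n`. As `w(n)` grows like
`(1 + √2)^n` while `J^c_n` has `2 c 3^n` leaves and fewer than `3^(n+1)` Left vertices, both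
proportions behave as claimed once `c` is large.
-/

def weight (c : ℕ) : ℕ → ℕ
  | 0 => c + 1
  | 1 => 2 * c + 3
  | m + 2 => 2 * weight c (m + 1) + weight c m + 1

lemma weight_add_two (c m : ℕ) : weight c (m + 2) = 2 * weight c (m + 1) + weight c m + 1 :=
  rfl

lemma le_weight (c m : ℕ) : m + c + 1 ≤ weight c m := by
  induction m using Nat.strong_induction_on with
  | _ m ih =>
    match m with
    | 0 => simp [weight]
    | 1 => simp [weight]; omega
    | m + 2 =>
      have := ih (m + 1) (by omega)
      rw [weight_add_two]; omega

lemma weight_mono (c : ℕ) : Monotone (weight c) := by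
  refine monotone_nat_of_le_succ fun m => ?_
  match m with
  | 0 => simp [weight]; omega
  | m + 1 => rw [weight_add_two]; omega

lemma two_mul_sum_weight_add_le (c m : ℕ) :
    2 * ∑ j ∈ range (m + 1), weight c j + (m + c + 2) ≤ weight c (m + 1) + weight c m := by
  induction m with
  | zero => simp [weight]; omega
  | succ m ih => rw [sum_range_succ, weight_add_two]; omega

lemma two_mul_sum_weight_add_le_of_le {c m e : ℕ} (he : ∀ k, m = k + 1 → weight c k ≤ e) :
    2 * ∑ j ∈ range m, weight c j + (m + c + 1) ≤ weight c m + e := by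
  cases m with
  | zero => simp [weight]
  | succ k =>
    have := two_mul_sum_weight_add_le c k
    have := he k rfl
    omega

lemma three_mul_weight_succ_le {c : ℕ} (hc : 1 ≤ c) (m : ℕ) :
    3 * weight c (m + 1) ≤ 8 * weight c m := by
  match m with
  | 0 => simp [weight]; omega
  | 1 => simp [weight]; omega
  | m + 2 =>
    have := le_weight c m
    have := le_weight c (m + 1)
    rw [weight_add_two, weight_add_two c m]
    omega

lemma three_pow_mul_weight_le {c : ℕ} (hc : 1 ≤ c) (m : ℕ) :
    3 ^ m * weight c m ≤ (c + 1) * 8 ^ m := by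
  induction m with
  | zero => simp [weight]
  | succ m ih =>
    calc 3 ^ (m + 1) * weight c (m + 1) = 3 ^ m * (3 * weight c (m + 1)) := by ring
      _ ≤ 3 ^ m * (8 * weight c m) := Nat.mul_le_mul_left _ (three_mul_weight_succ_le hc m)
      _ = 8 * (3 ^ m * weight c m) := by ring
      _ ≤ 8 * ((c + 1) * 8 ^ m) := Nat.mul_le_mul_left _ ih
      _ = (c + 1) * 8 ^ (m + 1) := by ring

lemma card_sdiff_le_card_sdiff_union_add (s t w : Finset α) :
    (s \ t).card ≤ (s \ (t ∪ w)).card + w.card := by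
  simpa only [sdiff_sdiff_left, sup_eq_union] using
    card_le_card_sdiff_add_card (s := s \ t) (t := w)

lemma card_sdiff_union_lt {s t w : Finset α} {x : α} (hx : x ∈ s \ t) (hxw : x ∈ w) :
    (s \ (t ∪ w)).card < (s \ t).card := by
  refine card_lt_card ⟨sdiff_subset_sdiff subset_rfl subset_union_left, fun h => ?_⟩
  exact (mem_sdiff.1 (h hx)).2 (mem_union_right _ hxw)

namespace Pos

abbrev Reach (G : Pos α) : α → α → Prop := Relation.ReflTransGen fun a b => (a, b) ∈ G.A

variable {G : Pos α} {S : Finset α} {a b x y z : α}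

lemma mem_Succ : z ∈ G.Succ x ↔ z ∈ G.V ∧ G.Reach x z := by simp [Succ]

lemma mem_Pred : z ∈ G.Pred y ↔ z ∈ G.V ∧ G.Reach z y := by simp [Pred]

lemma mem_erase_A :
    (a, b) ∈ (G.erase S).A ↔ (a, b) ∈ G.A ∧ a ∈ G.V \ S ∧ b ∈ G.V \ S := by
  simp [erase]

@[simp] lemma erase_V : (G.erase S).V = G.V \ S := rfl

@[simp] lemma erase_left : (G.erase S).left = G.left \ S := rfl

lemma mem_erase_R : z ∈ (G.erase S).R ↔ z ∈ G.V ∧ z ∉ S ∧ z ∉ G.left := by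
  simp only [R, erase_V, erase_left, mem_sdiff]
  tauto

lemma erase_empty (hG : G.WF) : G.erase ∅ = G := by
  obtain ⟨V, A, left⟩ := G
  simp only [erase, sdiff_empty, Pos.mk.injEq, true_and, and_true]
  exact filter_true_of_mem fun p hp => hG.1 p hp

lemma erase_erase (G : Pos α) (S T : Finset α) : (G.erase S).erase T = G.erase (S ∪ T) := by
  simp only [erase, Pos.mk.injEq, sdiff_sdiff_left, ← sup_eq_union, true_and, and_true]
  ext p
  simp only [mem_filter, mem_sdiff, sup_eq_union, mem_union, not_or]
  tauto

def PredClosed (G : Pos α) (S : Finset α) : Prop :=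
  ∀ a b, (a, b) ∈ G.A → b ∈ S → a ∈ S

lemma PredClosed.mem_of_reach (hS : G.PredClosed S) (h : G.Reach a b) (hb : b ∈ S) : a ∈ S := by
  induction h using Relation.ReflTransGen.head_induction_on with
  | refl => exact hb
  | head hab _ ih => exact hS _ _ hab ih

lemma PredClosed.union_pred (hG : G.WF) (hS : G.PredClosed S) : G.PredClosed (S ∪ G.Pred y) := by
  intro a b hab hb
  rcases mem_union.1 hb with hb | hb
  · exact mem_union_left _ (hS a b hab hb)
  · exact mem_union_right _ (mem_Pred.2 ⟨(hG.1 _ hab).1, (mem_Pred.1 hb).2.head hab⟩)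

lemma reach_erase_iff (hG : G.WF) (hS : G.PredClosed S) (haS : a ∉ S) :
    (G.erase S).Reach a b ↔ G.Reach a b := by
  refine ⟨Relation.ReflTransGen.mono (fun p q hpq => (mem_erase_A.1 hpq).1) a b, fun h => ?_⟩
  induction h with
  | refl => exact .refl
  | @tail p q hap hpq ih =>
    have hmem : ∀ {w}, G.Reach a w → w ∈ G.V → w ∈ G.V \ S :=
      fun hw hwV => mem_sdiff.2 ⟨hwV, fun hwS => haS (hS.mem_of_reach hw hwS)⟩
    exact ih.tail
      (mem_erase_A.2 ⟨hpq, hmem hap (hG.1 _ hpq).1, hmem (hap.tail hpq) (hG.1 _ hpq).2⟩)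

lemma succ_erase (hG : G.WF) (hS : G.PredClosed S) (hxS : x ∉ S) :
    (G.erase S).Succ x = G.Succ x := by
  ext z
  simp only [mem_Succ, reach_erase_iff hG hS hxS, erase_V, mem_sdiff]
  exact ⟨fun h => ⟨h.1.1, h.2⟩,
    fun h => ⟨⟨h.1, fun hzS => hxS (hS.mem_of_reach h.2 hzS)⟩, h.2⟩⟩

lemma pred_erase (hG : G.WF) (hS : G.PredClosed S) (y : α) :
    (G.erase S).Pred y = G.Pred y \ S := by
  ext z
  simp only [mem_Pred, mem_sdiff, erase_V]
  constructor
  · rintro ⟨⟨hz, hzS⟩, h⟩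
    exact ⟨⟨hz, (reach_erase_iff hG hS hzS).1 h⟩, hzS⟩
  · rintro ⟨⟨hz, h⟩, hzS⟩
    exact ⟨⟨hz, hzS⟩, (reach_erase_iff hG hS hzS).2 h⟩

def children (G : Pos α) (v : α) : Finset α := G.V.filter fun w => (v, w) ∈ G.A

lemma mem_children : z ∈ G.children x ↔ z ∈ G.V ∧ (x, z) ∈ G.A := mem_filter

@[simp] lemma union_V {H : Pos α} : (G.union H).V = G.V ∪ H.V := rfl

@[simp] lemma union_A {H : Pos α} : (G.union H).A = G.A ∪ H.A := rfl

@[simp] lemma union_left {H : Pos α} : (G.union H).left = G.left ∪ H.left := rfl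

lemma WF.union {H : Pos α} (hG : G.WF) (hH : H.WF) : (G.union H).WF := by
  refine ⟨fun p hp => ?_, union_subset_union hG.2 hH.2⟩
  rcases mem_union.1 hp with hp | hp
  · exact ⟨mem_union_left _ (hG.1 p hp).1, mem_union_left _ (hG.1 p hp).2⟩
  · exact ⟨mem_union_right _ (hH.1 p hp).1, mem_union_right _ (hH.1 p hp).2⟩

lemma union_comm (G H : Pos α) : G.union H = H.union G := by
  simp only [union, Finset.union_comm]

lemma mem_union_A_iff_of_mem {H : Pos α} (hH : H.WF) (h : Disjoint G.V H.V) (hb : b ∈ G.V) :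
    (a, b) ∈ (G.union H).A ↔ (a, b) ∈ G.A := by
  rw [union_A, mem_union, or_iff_left fun hab => disjoint_left.1 h hb (hH.1 _ hab).2]

lemma children_union_of_mem {H : Pos α} (hG : G.WF) (hH : H.WF) (h : Disjoint G.V H.V)
    (hx : x ∈ G.V) : (G.union H).children x = G.children x := by
  ext z
  simp only [mem_children, union_V, union_A, mem_union]
  refine ⟨fun ⟨_, hxz⟩ => ?_, fun ⟨hz, hxz⟩ => ⟨.inl hz, .inl hxz⟩⟩
  have hxz : (x, z) ∈ G.A := hxz.resolve_right fun hxz => disjoint_left.1 h hx (hH.1 _ hxz).1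
  exact ⟨(hG.1 _ hxz).2, hxz⟩

open Classical in
noncomputable def roots (G : Pos α) (S : Finset α) : Finset α :=
  (G.V \ S).filter fun v => ∀ a, (a, v) ∈ G.A → a ∈ S

lemma mem_roots :
    z ∈ G.roots S ↔ z ∈ G.V ∧ z ∉ S ∧ ∀ a, (a, z) ∈ G.A → a ∈ S := by
  simp [roots, and_assoc]

lemma roots_union_succ_subset (hx : x ∈ G.roots S) :
    G.roots (S ∪ G.Succ x) ⊆ (G.roots S).erase x := by
  intro v hv
  obtain ⟨hvV, hvS, hpar⟩ := mem_roots.1 hv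
  rw [mem_union, not_or] at hvS
  have hxV := (mem_roots.1 hx).1
  refine mem_erase.2 ⟨?_, mem_roots.2 ⟨hvV, hvS.1, ?_⟩⟩
  · rintro rfl
    exact hvS.2 (mem_Succ.2 ⟨hxV, .refl⟩)
  intro a hav
  refine (mem_union.1 (hpar a hav)).resolve_right fun ha => hvS.2 ?_
  exact mem_Succ.2 ⟨hvV, (mem_Succ.1 ha).2.tail hav⟩

/-- Positions reached in play are `G.erase S` with `S` admissible: what is left is a union of
full subtrees, none of which is a single leaf. -/
structure Admissible (G : Pos α) (S : Finset α) : Prop where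
  predClosed : G.PredClosed S
  roots_subset_left : G.roots S ⊆ G.left

end Pos

open Pos

/-- `IsTnc` without the uniqueness of the root: a disjoint union of copies of `T^c_n`,
together with its level function. -/
structure FullForest (n c : ℕ) (J : Pos α) where
  wf : J.WF
  lvl : α → ℕ
  lvl_le : ∀ v ∈ J.V, lvl v ≤ n + 1
  left_eq : J.left = J.V.filter fun v => lvl v ≤ n
  lvl_snd_eq : ∀ p ∈ J.A, lvl p.2 = lvl p.1 + 1
  existsUnique_parent : ∀ v ∈ J.V, 0 < lvl v → ∃! u, (u, v) ∈ J.A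
  card_children_of_lt : ∀ v ∈ J.V, lvl v < n → (J.children v).card = 3
  card_children_of_eq : ∀ v ∈ J.V, lvl v = n → (J.children v).card = c

namespace IsTnc

variable {n c : ℕ} {T : Pos α}

noncomputable def toFullForest (h : IsTnc n c T) : FullForest n c T :=
  have hl := h.2.choose_spec
  ⟨h.1, h.2.choose, hl.1, hl.2.1, hl.2.2.2.1, hl.2.2.2.2.1, hl.2.2.2.2.2.1, hl.2.2.2.2.2.2⟩

lemma V_nonempty (h : IsTnc n c T) : T.V.Nonempty :=
  have ⟨r, hr, _⟩ := h.2.choose_spec.2.2.1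
  ⟨r, hr.1⟩

end IsTnc

namespace FullForest

variable {n c : ℕ} {J T₁ T₂ : Pos α} {a b u v y z : α}

def union (F₁ : FullForest n c T₁) (F₂ : FullForest n c T₂) (h : Disjoint T₁.V T₂.V) :
    FullForest n c (T₁.union T₂) := by
  have not₁ : ∀ {v}, v ∈ T₂.V → v ∉ T₁.V := fun hv hv₁ => disjoint_left.1 h hv₁ hv
  have arc₁ : ∀ {a b}, b ∈ T₁.V →
      ((a, b) ∈ (T₁.union T₂).A ↔ (a, b) ∈ T₁.A) :=
    mem_union_A_iff_of_mem F₂.wf h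
  have arc₂ : ∀ {a b}, b ∈ T₂.V →
      ((a, b) ∈ (T₁.union T₂).A ↔ (a, b) ∈ T₂.A) := by
    intro a b hb
    rw [Pos.union_comm]
    exact mem_union_A_iff_of_mem F₁.wf h.symm hb
  have ch₁ : ∀ {v}, v ∈ T₁.V → (T₁.union T₂).children v = T₁.children v :=
    children_union_of_mem F₁.wf F₂.wf h
  have ch₂ : ∀ {v}, v ∈ T₂.V → (T₁.union T₂).children v = T₂.children v := by
    intro v hv
    rw [Pos.union_comm]
    exact children_union_of_mem F₂.wf F₁.wf h.symm hv
  refine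
    { wf := F₁.wf.union F₂.wf
      lvl := fun v => if v ∈ T₁.V then F₁.lvl v else F₂.lvl v
      lvl_le := fun v hv => ?_, left_eq := ?_, lvl_snd_eq := fun p hp => ?_
      existsUnique_parent := fun v hv => ?_, card_children_of_lt := fun v hv => ?_
      card_children_of_eq := fun v hv => ?_ }
  · rcases mem_union.1 hv with hv | hv
    · simpa [hv] using F₁.lvl_le v hv
    · simpa [not₁ hv] using F₂.lvl_le v hv
  · ext v
    simp only [union_left, union_V, F₁.left_eq, F₂.left_eq, mem_union, mem_filter]
    by_cases hv : v ∈ T₁.V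
    · have : v ∉ T₂.V := fun hv₂ => not₁ hv₂ hv
      simp [hv, this]
    · simp [hv]
  · rcases mem_union.1 hp with hp | hp
    · simpa [(F₁.wf.1 p hp).1, (F₁.wf.1 p hp).2] using F₁.lvl_snd_eq p hp
    · simpa [not₁ (F₂.wf.1 p hp).1, not₁ (F₂.wf.1 p hp).2] using F₂.lvl_snd_eq p hp
  all_goals rcases mem_union.1 hv with hv | hv
  · simpa only [hv, if_true, arc₁ hv] using F₁.existsUnique_parent v hv
  · simpa only [not₁ hv, if_false, arc₂ hv] using F₂.existsUnique_parent v hv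
  · simpa only [hv, if_true, ch₁ hv] using F₁.card_children_of_lt v hv
  · simpa only [not₁ hv, if_false, ch₂ hv] using F₂.card_children_of_lt v hv
  · simpa only [hv, if_true, ch₁ hv] using F₁.card_children_of_eq v hv
  · simpa only [not₁ hv, if_false, ch₂ hv] using F₂.card_children_of_eq v hv

variable (F : FullForest n c J)
include F

lemma mem_V_of_arc (hab : (a, b) ∈ J.A) : a ∈ J.V ∧ b ∈ J.V := F.wf.1 _ hab

lemma lvl_of_arc (hab : (a, b) ∈ J.A) : F.lvl b = F.lvl a + 1 := F.lvl_snd_eq _ hab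

lemma mem_left_iff : v ∈ J.left ↔ v ∈ J.V ∧ F.lvl v ≤ n := by rw [F.left_eq, mem_filter]

lemma lvl_eq_of_notMem_left (hv : v ∈ J.V) (hvl : v ∉ J.left) : F.lvl v = n + 1 := by
  have := F.lvl_le v hv
  have : ¬ F.lvl v ≤ n := fun h => hvl (F.mem_left_iff.2 ⟨hv, h⟩)
  omega

lemma mem_left_of_arc (hab : (a, b) ∈ J.A) : a ∈ J.left := by
  have := F.lvl_le b (F.mem_V_of_arc hab).2
  exact F.mem_left_iff.2 ⟨(F.mem_V_of_arc hab).1, by rw [F.lvl_of_arc hab] at this; omega⟩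

lemma exists_parent (hv : v ∈ J.V) (h : 0 < F.lvl v) : ∃ u, (u, v) ∈ J.A :=
  (F.existsUnique_parent v hv h).exists

lemma eq_of_arc_of_arc (ha : (a, v) ∈ J.A) (hb : (b, v) ∈ J.A) : a = b := by
  have hv := (F.mem_V_of_arc ha).2
  exact (F.existsUnique_parent v hv (by rw [F.lvl_of_arc ha]; omega)).unique ha hb

lemma lvl_le_of_reach (h : J.Reach a b) : F.lvl a ≤ F.lvl b := by
  induction h with
  | refl => rfl
  | tail _ hpq ih => rw [F.lvl_of_arc hpq]; omega

lemma lvl_lt_of_reach (h : J.Reach a b) (hne : a ≠ b) : F.lvl a < F.lvl b := by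
  rcases h.cases_head with rfl | ⟨w, haw, hwb⟩
  · exact absurd rfl hne
  · have := F.lvl_le_of_reach hwb
    rw [F.lvl_of_arc haw] at this
    omega

lemma reach_or_reach (ha : J.Reach a y) (hb : J.Reach b y) : J.Reach a b ∨ J.Reach b a := by
  induction ha generalizing b with
  | refl => exact .inr hb
  | @tail p q hap hpq ih =>
    rcases hb.cases_tail with rfl | ⟨w, hbw, hwq⟩
    · exact .inl (hap.tail hpq)
    · exact ih (F.eq_of_arc_of_arc hwq hpq ▸ hbw)

lemma eq_of_reach_of_lvl_eq (ha : J.Reach a y) (hb : J.Reach b y) (h : F.lvl a = F.lvl b) :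
    a = b := by
  by_contra hne
  rcases F.reach_or_reach ha hb with hab | hba
  · exact (F.lvl_lt_of_reach hab hne).ne h
  · exact (F.lvl_lt_of_reach hba (Ne.symm hne)).ne h.symm

lemma children_nonempty (hc : 1 ≤ c) (hv : v ∈ J.left) : (J.children v).Nonempty := by
  obtain ⟨hvV, hvn⟩ := F.mem_left_iff.1 hv
  rw [← card_pos]
  rcases hvn.lt_or_eq with hlt | heq
  · rw [F.card_children_of_lt v hvV hlt]; omega
  · rw [F.card_children_of_eq v hvV heq]; omega

lemma exists_reach_notMem_left (hc : 1 ≤ c) (hv : v ∈ J.V) :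
    ∃ z ∈ J.V, J.Reach v z ∧ z ∉ J.left := by
  induction h : n + 1 - F.lvl v generalizing v with
  | zero =>
    refine ⟨v, hv, .refl, fun hvl => ?_⟩
    have := (F.mem_left_iff.1 hvl).2
    omega
  | succ k ih =>
    by_cases hvl : v ∈ J.left
    · obtain ⟨w, hw⟩ := F.children_nonempty hc hvl
      obtain ⟨hwV, hvw⟩ := mem_children.1 hw
      obtain ⟨z, hz, hwz, hzl⟩ := ih hwV (by rw [F.lvl_of_arc hvw]; omega)
      exact ⟨z, hz, .head hvw hwz, hzl⟩
    · exact ⟨v, hv, .refl, hvl⟩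

variable {S T : Finset α} {r : α}

lemma roots_union_subset (hT : Disjoint T J.left) : J.roots (S ∪ T) ⊆ J.roots S := by
  intro v hv
  obtain ⟨hvV, hvS, hpar⟩ := mem_roots.1 hv
  refine mem_roots.2 ⟨hvV, fun h => hvS (mem_union_left _ h), fun a hav => ?_⟩
  exact (mem_union.1 (hpar a hav)).resolve_right
    fun haT => disjoint_left.1 hT haT (F.mem_left_of_arc hav)

lemma forc_erase (hc : 1 ≤ c) (hS : J.PredClosed S) :
    (J.erase S).Forc = J.roots S \ J.left := by
  ext z
  simp only [Forc, ForcL, ForcR, mem_union, mem_filter, mem_sdiff, mem_roots,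
    pred_erase F.wf hS]
  constructor
  · rintro (⟨hzl, hsub⟩ | ⟨hzR, hsub⟩)
    · exfalso
      obtain ⟨hzl, hzS⟩ := mem_sdiff.1 hzl
      obtain ⟨w, hw, hzw, hwl⟩ := F.exists_reach_notMem_left hc (F.wf.2 hzl)
      rw [succ_erase F.wf hS hzS] at hsub
      exact hwl (mem_sdiff.1 (hsub (mem_Succ.2 ⟨hw, hzw⟩))).1
    · obtain ⟨hzV, hzS, hzl⟩ := mem_erase_R.1 hzR
      refine ⟨⟨hzV, hzS, fun a haz => ?_⟩, hzl⟩
      by_contra haS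
      have haP : a ∈ J.Pred z \ S :=
        mem_sdiff.2 ⟨mem_Pred.2 ⟨(F.mem_V_of_arc haz).1, .single haz⟩, haS⟩
      exact (mem_erase_R.1 (hsub haP)).2.2 (F.mem_left_of_arc haz)
  · rintro ⟨⟨hzV, hzS, hpar⟩, hzl⟩
    refine .inr ⟨mem_erase_R.2 ⟨hzV, hzS, hzl⟩, fun w hw => ?_⟩
    obtain ⟨hwz, hwS⟩ := mem_sdiff.1 hw
    rcases (mem_Pred.1 hwz).2.cases_tail with rfl | ⟨a, hwa, haz⟩
    · exact mem_erase_R.2 ⟨hzV, hzS, hzl⟩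
    · exact absurd (hS.mem_of_reach hwa (hpar a haz)) hwS

lemma admissible_union_roots_sdiff_left (hS : J.PredClosed S) :
    J.Admissible (S ∪ (J.roots S \ J.left)) := by
  refine ⟨fun a b hab hb => ?_, fun v hv => ?_⟩
  · rcases mem_union.1 hb with hb | hb
    · exact mem_union_left _ (hS a b hab hb)
    · exact mem_union_left _ ((mem_roots.1 (mem_sdiff.1 hb).1).2.2 a hab)
  · by_contra hvl
    have hvS := F.roots_union_subset sdiff_disjoint hv
    exact (mem_roots.1 hv).2.1 (mem_union_right _ (mem_sdiff.2 ⟨hvS, hvl⟩))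

lemma exists_root_reach (hy : y ∈ J.V) (hyS : y ∉ S) :
    ∃ u ∈ J.roots S, J.Reach u y := by
  obtain ⟨u, hu, hmin⟩ := exists_min_image (J.Pred y \ S) F.lvl
    ⟨y, mem_sdiff.2 ⟨mem_Pred.2 ⟨hy, .refl⟩, hyS⟩⟩
  obtain ⟨huP, huS⟩ := mem_sdiff.1 hu
  obtain ⟨huV, huy⟩ := mem_Pred.1 huP
  refine ⟨u, mem_roots.2 ⟨huV, huS, fun a hau => ?_⟩, huy⟩
  by_contra haS
  have := hmin a (mem_sdiff.2 ⟨mem_Pred.2 ⟨(F.mem_V_of_arc hau).1, huy.head hau⟩, haS⟩)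
  rw [F.lvl_of_arc hau] at this
  omega

lemma predClosed_union_succ (hS : J.PredClosed S) (hr : r ∈ J.roots S) :
    J.PredClosed (S ∪ J.Succ r) := by
  intro a b hab hb
  rcases mem_union.1 hb with hb | hb
  · exact mem_union_left _ (hS a b hab hb)
  obtain ⟨-, hrb⟩ := mem_Succ.1 hb
  rcases hrb.cases_tail with rfl | ⟨p, hrp, hpb⟩
  · exact mem_union_left _ ((mem_roots.1 hr).2.2 a hab)
  · rw [F.eq_of_arc_of_arc hab hpb]
    exact mem_union_right _ (mem_Succ.2 ⟨(F.mem_V_of_arc hpb).1, hrp⟩)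

lemma admissible_union_succ (hS : J.Admissible S) (hr : r ∈ J.roots S) :
    J.Admissible (S ∪ J.Succ r) :=
  ⟨F.predClosed_union_succ hS.predClosed hr,
    (roots_union_succ_subset hr).trans ((erase_subset _ _).trans hS.roots_subset_left)⟩

lemma rmv_root (hc : 1 ≤ c) (hS : J.Admissible S) (hr : r ∈ J.roots S) :
    (J.erase S).Rmv r = J.Succ r := by
  have hrS := (mem_roots.1 hr).2.1
  have hrl : r ∈ (J.erase S).left := mem_sdiff.2 ⟨hS.roots_subset_left hr, hrS⟩
  rw [Rmv, if_pos hrl, succ_erase F.wf hS.predClosed hrS, erase_erase,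
    F.forc_erase hc (F.admissible_union_succ hS hr).predClosed,
    sdiff_eq_empty_iff_subset.2 (F.admissible_union_succ hS hr).roots_subset_left, union_empty]

/-- The total weight of the components of `J.erase S`; the component rooted at `v` is a copy
of `T^c_{n - lvl v}`. -/
noncomputable def potential (S : Finset α) : ℕ := ∑ v ∈ J.roots S, weight c (n - F.lvl v)

lemma potential_union_succ_add_le (hr : r ∈ J.roots S) :
    F.potential (S ∪ J.Succ r) + weight c (n - F.lvl r) ≤ F.potential S := by
  rw [potential, potential, ← sum_erase_add _ _ hr]
  gcongr
  exact roots_union_succ_subset hr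

lemma add_sL2Aux_le_sL1Aux (hc : 1 ≤ c) (hS : J.Admissible S) (hr : r ∈ J.roots S) (k : ℕ) :
    (J.Succ r).card + sL2Aux k (J.erase (S ∪ J.Succ r)) ≤ sL1Aux (k + 1) (J.erase S) := by
  have hrl : r ∈ (J.erase S).left :=
    mem_sdiff.2 ⟨hS.roots_subset_left hr, (mem_roots.1 hr).2.1⟩
  rw [sL1Aux, if_pos ⟨r, hrl⟩]
  calc (J.Succ r).card + sL2Aux k (J.erase (S ∪ J.Succ r))
      = ((J.erase S).Rmv r).card + sL2Aux k ((J.erase S).move r) := by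
        rw [move, erase_erase, F.rmv_root hc hS hr]
    _ ≤ _ := le_sup (f := fun x => ((J.erase S).Rmv x).card + sL2Aux k ((J.erase S).move x)) hrl

variable {p : α}

lemma lvl_le_of_mem_pred_sdiff (hS : J.PredClosed S) (hu : u ∈ J.roots S) (huy : J.Reach u y)
    (hz : z ∈ J.Pred y \ S) : F.lvl u ≤ F.lvl z := by
  obtain ⟨hzy, hzS⟩ := mem_sdiff.1 hz
  rcases F.reach_or_reach huy (mem_Pred.1 hzy).2 with huz | hzu
  · exact F.lvl_le_of_reach huz
  · rcases hzu.cases_tail with rfl | ⟨a, hza, hau⟩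
    · rfl
    · exact absurd (hS.mem_of_reach hza ((mem_roots.1 hu).2.2 a hau)) hzS

lemma rmv_leaf (hc : 1 ≤ c) (hS : J.PredClosed S) (hyR : y ∈ (J.erase S).R) :
    (J.erase S).Rmv y = (J.Pred y \ S) ∪ (J.roots (S ∪ J.Pred y) \ J.left) := by
  rw [Rmv, if_neg (mem_sdiff.1 hyR).2, pred_erase F.wf hS, erase_erase, union_sdiff_self_eq_union,
    F.forc_erase hc (hS.union_pred F.wf)]

lemma union_rmv_leaf (hc : 1 ≤ c) (hS : J.PredClosed S) (hyR : y ∈ (J.erase S).R) :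
    S ∪ (J.erase S).Rmv y = S ∪ J.Pred y ∪ (J.roots (S ∪ J.Pred y) \ J.left) := by
  rw [F.rmv_leaf hc hS hyR, ← union_assoc, union_sdiff_self_eq_union]

lemma admissible_union_rmv_leaf (hc : 1 ≤ c) (hS : J.PredClosed S) (hyR : y ∈ (J.erase S).R) :
    J.Admissible (S ∪ (J.erase S).Rmv y) := by
  rw [F.union_rmv_leaf hc hS hyR]
  exact F.admissible_union_roots_sdiff_left (hS.union_pred F.wf)

lemma card_pred_sdiff_le (hS : J.PredClosed S) (hyR : y ∈ (J.erase S).R) (hu : u ∈ J.roots S)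
    (huy : J.Reach u y) : (J.Pred y \ S).card ≤ n + 2 - F.lvl u := by
  obtain ⟨hy, -, hyl⟩ := mem_erase_R.1 hyR
  have hlvl := F.lvl_eq_of_notMem_left hy hyl
  calc (J.Pred y \ S).card ≤ (Icc (F.lvl u) (n + 1)).card := by
        refine card_le_card_of_injOn F.lvl (fun z hz => mem_Icc.2 ⟨?_, ?_⟩)
          fun z hz w hw h => ?_
        · exact F.lvl_le_of_mem_pred_sdiff hS hu huy hz
        · exact hlvl ▸ F.lvl_le_of_reach (mem_Pred.1 (mem_sdiff.1 hz).1).2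
        · exact F.eq_of_reach_of_lvl_eq (mem_Pred.1 (mem_sdiff.1 hz).1).2
            (mem_Pred.1 (mem_sdiff.1 hw).1).2 h
    _ = n + 2 - F.lvl u := by simp

/-- The leaves forced off by Right's move at `y` are siblings of `y`. -/
lemma roots_sdiff_left_subset (hS : J.Admissible S) (hyR : y ∈ (J.erase S).R)
    (hp : (p, y) ∈ J.A) : J.roots (S ∪ J.Pred y) \ J.left ⊆ (J.children p).erase y := by
  obtain ⟨hy, -, hyl⟩ := mem_erase_R.1 hyR
  intro z hz
  obtain ⟨hzr, hzl⟩ := mem_sdiff.1 hz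
  obtain ⟨hzV, hzT, hpar⟩ := mem_roots.1 hzr
  rw [mem_union, not_or] at hzT
  obtain ⟨a, haz⟩ := F.exists_parent hzV (by rw [F.lvl_eq_of_notMem_left hzV hzl]; omega)
  have hay : a ∈ J.Pred y := by
    refine (mem_union.1 (hpar a haz)).resolve_left fun haS => hzl (hS.roots_subset_left ?_)
    exact mem_roots.2 ⟨hzV, hzT.1, fun b hbz => F.eq_of_arc_of_arc hbz haz ▸ haS⟩
  have hap : a = p := by
    refine F.eq_of_reach_of_lvl_eq (mem_Pred.1 hay).2 (.single hp) ?_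
    have := F.lvl_of_arc haz
    rw [F.lvl_eq_of_notMem_left hzV hzl, ← F.lvl_eq_of_notMem_left hy hyl,
      F.lvl_of_arc hp] at this
    omega
  refine mem_erase.2 ⟨?_, mem_children.2 ⟨hzV, hap ▸ haz⟩⟩
  rintro rfl
  exact hzT.2 (mem_Pred.2 ⟨hy, .refl⟩)

lemma card_rmv_leaf_le (hc : 1 ≤ c) (hS : J.Admissible S) (hyR : y ∈ (J.erase S).R)
    (hu : u ∈ J.roots S) (huy : J.Reach u y) :
    ((J.erase S).Rmv y).card ≤ n - F.lvl u + c + 1 := by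
  obtain ⟨hy, -, hyl⟩ := mem_erase_R.1 hyR
  have hlvl := F.lvl_eq_of_notMem_left hy hyl
  obtain ⟨p, hp⟩ := F.exists_parent hy (by omega)
  have hpV := (F.mem_V_of_arc hp).1
  have hsib : (J.roots (S ∪ J.Pred y) \ J.left).card ≤ c - 1 := by
    calc _ ≤ ((J.children p).erase y).card :=
          card_le_card (F.roots_sdiff_left_subset hS hyR hp)
      _ = c - 1 := by
          rw [card_erase_of_mem (mem_children.2 ⟨hy, hp⟩),
            F.card_children_of_eq p hpV (by have := F.lvl_of_arc hp; omega)]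
  have hun := (F.mem_left_iff.1 (hS.roots_subset_left hu)).2
  rw [F.rmv_leaf hc hS.predClosed hyR]
  have := card_union_le (J.Pred y \ S) (J.roots (S ∪ J.Pred y) \ J.left)
  have := F.card_pred_sdiff_le hS.predClosed hyR hu huy
  omega

lemma pred_subset_union_rmv_leaf (hc : 1 ≤ c) (hS : J.PredClosed S) (hyR : y ∈ (J.erase S).R) :
    J.Pred y ⊆ S ∪ (J.erase S).Rmv y := by
  rw [F.union_rmv_leaf hc hS hyR]
  exact subset_union_right.trans subset_union_left

/-- The third child of `a` continues the path removed by Right. -/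
lemma card_roots_children_le_two (hc : 1 ≤ c) (hS : J.PredClosed S) (hyR : y ∈ (J.erase S).R)
    (ha : a ∈ J.Pred y) (hal : F.lvl a < n) :
    ((J.roots (S ∪ (J.erase S).Rmv y)).filter fun v => (a, v) ∈ J.A).card ≤ 2 := by
  obtain ⟨hy, -, hyl⟩ := mem_erase_R.1 hyR
  obtain ⟨haV, hay⟩ := mem_Pred.1 ha
  obtain ⟨b, hab, hby⟩ := hay.cases_head.resolve_left fun h => by
    have := F.lvl_eq_of_notMem_left hy hyl
    rw [← h] at this
    omega
  have hbS' := F.pred_subset_union_rmv_leaf hc hS hyR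
    (mem_Pred.2 ⟨(F.mem_V_of_arc hab).2, hby⟩)
  calc _ ≤ ((J.children a).erase b).card := by
        refine card_le_card fun v hv => ?_
        obtain ⟨hvr, hav⟩ := mem_filter.1 hv
        obtain ⟨hvV, hvS', -⟩ := mem_roots.1 hvr
        exact mem_erase.2 ⟨fun h => hvS' (h ▸ hbS'), mem_children.2 ⟨hvV, hav⟩⟩
    _ = 2 := by
        rw [card_erase_of_mem (mem_children.2 ⟨(F.mem_V_of_arc hab).2, hab⟩),
          F.card_children_of_lt a haV hal]

lemma sum_weight_roots_of_parent_mem_le (hc : 1 ≤ c) (hS : J.PredClosed S)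
    (hyR : y ∈ (J.erase S).R) (hu : u ∈ J.roots S) (huy : J.Reach u y) :
    ∑ v ∈ (J.roots (S ∪ (J.erase S).Rmv y)).filter
        (fun v => ∃ a ∈ J.Pred y \ S, (a, v) ∈ J.A), weight c (n - F.lvl v) ≤
      2 * ∑ j ∈ range (n - F.lvl u), weight c j := by
  set N := (J.roots (S ∪ (J.erase S).Rmv y)).filter
    fun v => ∃ a ∈ J.Pred y \ S, (a, v) ∈ J.A
  have hS' := F.admissible_union_rmv_leaf hc hS hyR
  have hN : ∀ v ∈ N,
      F.lvl v ≤ n ∧ ∃ a ∈ J.Pred y \ S, (a, v) ∈ J.A ∧ F.lvl u ≤ F.lvl a := by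
    intro v hv
    obtain ⟨hvr, a, ha, hav⟩ := mem_filter.1 hv
    exact ⟨(F.mem_left_iff.1 (hS'.roots_subset_left hvr)).2, a, ha, hav,
      F.lvl_le_of_mem_pred_sdiff hS hu huy ha⟩
  rw [← sum_fiberwise_of_maps_to (g := fun v => n - F.lvl v) (t := range (n - F.lvl u))
    fun v hv => by
      obtain ⟨hvn, a, -, hav, hua⟩ := hN v hv
      have := F.lvl_of_arc hav
      exact mem_range.2 (by omega),
    mul_sum]
  refine sum_le_sum fun j _ => ?_
  rw [sum_congr rfl fun v hv => by rw [(mem_filter.1 hv).2], sum_const, smul_eq_mul]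
  refine Nat.mul_le_mul_right _ ?_
  rcases (N.filter fun v => n - F.lvl v = j).eq_empty_or_nonempty with h | ⟨v₀, hv₀⟩
  · simp [h]
  obtain ⟨hv₀N, hv₀j⟩ := mem_filter.1 hv₀
  obtain ⟨hv₀n, a₀, ha₀, ha₀v₀, -⟩ := hN v₀ hv₀N
  have := F.lvl_of_arc ha₀v₀
  refine le_trans (card_le_card fun v hv => ?_) (F.card_roots_children_le_two hc hS
    hyR (mem_sdiff.1 ha₀).1 (by omega))
  obtain ⟨hvN, hvj⟩ := mem_filter.1 hv
  obtain ⟨hvn, a, ha, hav, -⟩ := hN v hvN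
  refine mem_filter.2 ⟨(mem_filter.1 hvN).1, ?_⟩
  convert hav
  refine F.eq_of_reach_of_lvl_eq (mem_Pred.1 (mem_sdiff.1 ha₀).1).2
    (mem_Pred.1 (mem_sdiff.1 ha).1).2 ?_
  have := F.lvl_of_arc hav
  omega

lemma potential_union_rmv_leaf_add_le (hc : 1 ≤ c) (hS : J.PredClosed S)
    (hyR : y ∈ (J.erase S).R) (hu : u ∈ J.roots S) (huy : J.Reach u y) :
    F.potential (S ∪ (J.erase S).Rmv y) + weight c (n - F.lvl u) ≤
      F.potential S + 2 * ∑ j ∈ range (n - F.lvl u), weight c j := by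
  have hold : (J.roots (S ∪ (J.erase S).Rmv y)).filter
      (fun v => ¬ ∃ a ∈ J.Pred y \ S, (a, v) ∈ J.A) ⊆ (J.roots S).erase u := by
    intro v hv
    obtain ⟨hvr, hvq⟩ := mem_filter.1 hv
    have hvS' := (mem_roots.1 hvr).2.1
    have hvr' : v ∈ J.roots (S ∪ J.Pred y) := by
      rw [F.union_rmv_leaf hc hS hyR] at hvr
      exact F.roots_union_subset sdiff_disjoint hvr
    obtain ⟨hvV, hvT, hpar⟩ := mem_roots.1 hvr'
    refine mem_erase.2
      ⟨?_, mem_roots.2 ⟨hvV, fun h => hvT (mem_union_left _ h), fun a hav => ?_⟩⟩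
    · rintro rfl
      exact hvS' (F.pred_subset_union_rmv_leaf hc hS hyR (mem_Pred.2 ⟨hvV, huy⟩))
    · by_contra haS
      exact hvq ⟨a, mem_sdiff.2 ⟨(mem_union.1 (hpar a hav)).resolve_left haS, haS⟩, hav⟩
  have := F.sum_weight_roots_of_parent_mem_le hc hS hyR hu huy
  have := sum_le_sum_of_subset (f := fun v => weight c (n - F.lvl v)) hold
  rw [potential, potential, ← sum_filter_add_sum_filter_not _
    (fun v => ∃ a ∈ J.Pred y \ S, (a, v) ∈ J.A), ← sum_erase_add _ _ hu]
  omega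

lemma exists_root_union_rmv_leaf (hc : 1 ≤ c) (hS : J.PredClosed S) (hyR : y ∈ (J.erase S).R)
    (hu : u ∈ J.roots S) (huy : J.Reach u y) (hun : F.lvl u < n) :
    ∃ v ∈ J.roots (S ∪ (J.erase S).Rmv y), F.lvl v = F.lvl u + 1 := by
  obtain ⟨hy, -, hyl⟩ := mem_erase_R.1 hyR
  obtain ⟨huV, huS, -⟩ := mem_roots.1 hu
  obtain ⟨b, hub, hby⟩ := huy.cases_head.resolve_left fun h => by
    have := F.lvl_eq_of_notMem_left hy hyl
    rw [← h] at this
    omega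
  obtain ⟨v, hv⟩ : ((J.children u).erase b).Nonempty := by
    rw [← card_pos, card_erase_of_mem (mem_children.2 ⟨(F.mem_V_of_arc hub).2, hub⟩),
      F.card_children_of_lt u huV hun]
    omega
  obtain ⟨hvb, hvc⟩ := mem_erase.1 hv
  obtain ⟨hvV, huv⟩ := mem_children.1 hvc
  have hlv := F.lvl_of_arc huv
  refine ⟨v, mem_roots.2 ⟨hvV, ?_, fun a hav => ?_⟩, hlv⟩
  · rw [F.union_rmv_leaf hc hS hyR]
    simp only [mem_union, not_or]
    refine ⟨⟨fun hvS => huS (hS u v huv hvS), fun hvy => hvb ?_⟩, fun hvL => ?_⟩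
    · exact F.eq_of_reach_of_lvl_eq (mem_Pred.1 hvy).2 hby (by rw [hlv, F.lvl_of_arc hub])
    · exact (mem_sdiff.1 hvL).2 (F.mem_left_iff.2 ⟨hvV, by omega⟩)
  · rw [F.eq_of_arc_of_arc hav huv]
    exact F.pred_subset_union_rmv_leaf hc hS hyR (mem_Pred.2 ⟨huV, huy⟩)

lemma card_rmv_leaf_le_potential (hc : 1 ≤ c) (hS : J.Admissible S) (hyR : y ∈ (J.erase S).R) :
    ((J.erase S).Rmv y).card ≤ F.potential S := by
  obtain ⟨hy, hyS, -⟩ := mem_erase_R.1 hyR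
  obtain ⟨u, hu, huy⟩ := F.exists_root_reach hy hyS
  calc _ ≤ n - F.lvl u + c + 1 := F.card_rmv_leaf_le hc hS hyR hu huy
    _ ≤ weight c (n - F.lvl u) := le_weight c _
    _ ≤ F.potential S := single_le_sum (f := fun v => weight c (n - F.lvl v)) (by simp) hu

/-- Left's reply `r` is the root of a largest remaining component. -/
lemma exists_reply (hc : 1 ≤ c) (hS : J.Admissible S) (hyR : y ∈ (J.erase S).R)
    (hne : (J.V \ (S ∪ (J.erase S).Rmv y)).Nonempty) :
    ∃ r ∈ J.roots (S ∪ (J.erase S).Rmv y), ((J.erase S).Rmv y).card +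
      F.potential (S ∪ (J.erase S).Rmv y ∪ J.Succ r) ≤ F.potential S := by
  obtain ⟨hy, hyS, -⟩ := mem_erase_R.1 hyR
  obtain ⟨u, hu, huy⟩ := F.exists_root_reach hy hyS
  obtain ⟨z, hz⟩ := hne
  obtain ⟨u', hu', -⟩ := F.exists_root_reach (mem_sdiff.1 hz).1 (mem_sdiff.1 hz).2
  obtain ⟨r, hr, hmin⟩ := exists_min_image _ F.lvl ⟨u', hu'⟩
  refine ⟨r, hr, ?_⟩
  have hdeep : ∀ k, n - F.lvl u = k + 1 → weight c k ≤ weight c (n - F.lvl r) := by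
    intro k hk
    obtain ⟨v, hv, hlv⟩ := F.exists_root_union_rmv_leaf hc hS.predClosed hyR hu huy (by omega)
    exact weight_mono c (by have := hmin v hv; omega)
  have := two_mul_sum_weight_add_le_of_le hdeep
  have := F.card_rmv_leaf_le hc hS hyR hu huy
  have := F.potential_union_rmv_leaf_add_le hc hS.predClosed hyR hu huy
  have := F.potential_union_succ_add_le hr
  omega

lemma sdiff_eq_empty_of_R_eq_empty (hc : 1 ≤ c) (hS : J.PredClosed S)
    (hR : (J.erase S).R = ∅) : J.V \ S = ∅ := by
  refine eq_empty_of_forall_notMem fun z hz => not_nonempty_iff_eq_empty.2 hR ?_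
  obtain ⟨hzV, hzS⟩ := mem_sdiff.1 hz
  obtain ⟨w, hw, hzw, hwl⟩ := F.exists_reach_notMem_left hc hzV
  exact ⟨w, mem_erase_R.2 ⟨hw, fun hwS => hzS (hS.mem_of_reach hzw hwS), hwl⟩⟩

theorem card_le_sL2Aux_add_potential (hc : 1 ≤ c) (k : ℕ) :
    ∀ S, J.Admissible S → (J.V \ S).card ≤ k →
      (J.V \ S).card ≤ sL2Aux k (J.erase S) + F.potential S := by
  induction k using Nat.strong_induction_on with
  | _ k ih =>
  intro S hS hk
  rcases k with _ | k
  · omega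
  rw [sL2Aux]
  split_ifs with hR
  swap
  · simp [F.sdiff_eq_empty_of_R_eq_empty hc hS.predClosed (not_nonempty_iff_eq_empty.1 hR)]
  obtain ⟨y, hyR, hinf⟩ := exists_mem_eq_inf' hR fun y => sL1Aux k ((J.erase S).move y)
  rw [hinf]
  have hS' := F.admissible_union_rmv_leaf hc hS.predClosed hyR
  have hW := card_sdiff_le_card_sdiff_union_add J.V S ((J.erase S).Rmv y)
  rw [move, erase_erase]
  rcases (J.V \ (S ∪ (J.erase S).Rmv y)).eq_empty_or_nonempty with hW' | hW'
  · rw [hW', card_empty] at hW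
    have := F.card_rmv_leaf_le_potential hc hS hyR
    omega
  obtain ⟨r, hr, hpot⟩ := F.exists_reply hc hS hyR hW'
  obtain ⟨hy, hyS, -⟩ := mem_erase_R.1 hyR
  have hyRmv : y ∈ (J.erase S).Rmv y := by
    rw [F.rmv_leaf hc hS.predClosed hyR]
    exact mem_union_left _ (mem_sdiff.2 ⟨mem_Pred.2 ⟨hy, .refl⟩, hyS⟩)
  have hlt := card_sdiff_union_lt (mem_sdiff.2 ⟨hy, hyS⟩) hyRmv
  obtain ⟨hrV, hrS', -⟩ := mem_roots.1 hr
  have hlt' := card_sdiff_union_lt (mem_sdiff.2 ⟨hrV, hrS'⟩) (mem_Succ.2 ⟨hrV, .refl⟩)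
  obtain ⟨k, rfl⟩ : ∃ k', k = k' + 1 := ⟨k - 1, by omega⟩
  have hL := F.add_sL2Aux_le_sL1Aux hc hS' hr k
  have hW'' := card_sdiff_le_card_sdiff_union_add J.V (S ∪ (J.erase S).Rmv y) (J.Succ r)
  have := ih k (by omega) _ (F.admissible_union_succ hS' hr) (by omega)
  omega

def level (k : ℕ) : Finset α := J.V.filter fun v => F.lvl v = k

lemma mem_level {k : ℕ} : v ∈ F.level k ↔ v ∈ J.V ∧ F.lvl v = k := mem_filter

lemma card_level_succ (k : ℕ) :
    (F.level (k + 1)).card = ∑ v ∈ F.level k, (J.children v).card := by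
  rw [← card_biUnion]
  · congr 1
    ext w
    simp only [mem_biUnion, mem_level, mem_children]
    constructor
    · rintro ⟨hw, hwk⟩
      obtain ⟨v, hvw⟩ := F.exists_parent hw (by omega)
      have := F.lvl_of_arc hvw
      exact ⟨v, ⟨(F.mem_V_of_arc hvw).1, by omega⟩, hw, hvw⟩
    · rintro ⟨v, ⟨-, rfl⟩, hw, hvw⟩
      exact ⟨hw, F.lvl_of_arc hvw⟩
  · intro v _ v' _ hne
    exact disjoint_left.2 fun w hw hw' =>
      hne (F.eq_of_arc_of_arc (mem_children.1 hw).2 (mem_children.1 hw').2)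

lemma card_level {k : ℕ} (hk : k ≤ n) : (F.level k).card = 3 ^ k * (F.level 0).card := by
  induction k with
  | zero => simp
  | succ k ih =>
    rw [F.card_level_succ, sum_congr rfl fun v hv =>
      F.card_children_of_lt v (F.mem_level.1 hv).1 (by rw [(F.mem_level.1 hv).2]; omega),
      sum_const, smul_eq_mul, ih (by omega), pow_succ]
    ring

lemma card_level_succ_self : (F.level (n + 1)).card = c * 3 ^ n * (F.level 0).card := by
  rw [F.card_level_succ, sum_congr rfl fun v hv =>
    F.card_children_of_eq v (F.mem_level.1 hv).1 (F.mem_level.1 hv).2,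
    sum_const, smul_eq_mul, F.card_level le_rfl]
  ring

lemma two_mul_card_left_add :
    2 * J.left.card + (F.level 0).card = 3 ^ (n + 1) * (F.level 0).card := by
  have hleft : J.left = (range (n + 1)).biUnion F.level := by
    ext v
    simp only [F.mem_left_iff, mem_biUnion, mem_range, mem_level]
    exact ⟨fun ⟨hv, hvn⟩ => ⟨F.lvl v, by omega, hv, rfl⟩,
      fun ⟨k, hk, hv, hvk⟩ => ⟨hv, by omega⟩⟩
  rw [hleft, card_biUnion fun k _ k' _ hne => disjoint_left.2 fun v hv hv' =>
      hne ((F.mem_level.1 hv).2.symm.trans (F.mem_level.1 hv').2),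
    sum_congr rfl fun k hk => F.card_level (by rw [mem_range] at hk; omega), ← sum_mul]
  have := geom_sum_mul_add 2 (n + 1)
  norm_num at this
  rw [← this]
  ring

lemma roots_empty : J.roots ∅ = F.level 0 := by
  ext v
  simp only [mem_roots, notMem_empty, not_false_eq_true, imp_false, true_and, mem_level]
  refine ⟨fun ⟨hv, hpar⟩ => ⟨hv, ?_⟩, fun ⟨hv, hv0⟩ => ⟨hv, fun a hav => ?_⟩⟩
  · by_contra h
    obtain ⟨a, hav⟩ := F.exists_parent hv (Nat.pos_of_ne_zero h)
    exact hpar a hav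
  · have := F.lvl_of_arc hav
    omega

lemma admissible_empty : J.Admissible ∅ := by
  refine ⟨fun _ _ _ h => absurd h (notMem_empty _),
    fun v hv => F.mem_left_iff.2 ⟨(mem_roots.1 hv).1, ?_⟩⟩
  rw [F.roots_empty] at hv
  rw [(F.mem_level.1 hv).2]
  exact Nat.zero_le n

lemma potential_empty : F.potential ∅ = (F.level 0).card * weight c n := by
  rw [potential, F.roots_empty, sum_congr rfl fun v hv => by rw [(F.mem_level.1 hv).2],
    sum_const, smul_eq_mul, Nat.sub_zero]

lemma card_V_le_sL2_add_potential (hc : 1 ≤ c) : J.V.card ≤ J.sL2 + F.potential ∅ := by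
  simpa [sL2, erase_empty F.wf] using
    F.card_le_sL2Aux_add_potential hc J.V.card ∅ F.admissible_empty (by simp)

lemma two_mul_mul_card_left_le : 2 * c * J.left.card ≤ 3 * J.V.card :=
  calc 2 * c * J.left.card ≤ c * (2 * J.left.card + (F.level 0).card) := by
        rw [mul_add, ← mul_assoc, mul_comm c 2]
        exact Nat.le_add_right _ _
    _ = 3 * (F.level (n + 1)).card := by
        rw [F.two_mul_card_left_add, F.card_level_succ_self, pow_succ]
        ring
    _ ≤ 3 * J.V.card := Nat.mul_le_mul_left _ (card_le_card (filter_subset _ _))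

lemma mul_potential_empty_le : c * 3 ^ n * F.potential ∅ ≤ J.V.card * weight c n := by
  rw [F.potential_empty, ← mul_assoc, ← F.card_level_succ_self]
  exact Nat.mul_le_mul_right _ (card_le_card (filter_subset _ _))

lemma pow_mul_potential_empty_le (hc : 1 ≤ c) :
    9 ^ n * F.potential ∅ ≤ 2 * 8 ^ n * J.V.card := by
  refine Nat.le_of_mul_le_mul_left ?_ (by omega : 0 < c)
  have h9 : 9 ^ n = 3 ^ n * 3 ^ n := by rw [← mul_pow]; norm_num
  calc c * (9 ^ n * F.potential ∅) = 3 ^ n * (c * 3 ^ n * F.potential ∅) := by rw [h9]; ring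
    _ ≤ 3 ^ n * (J.V.card * weight c n) := Nat.mul_le_mul_left _ F.mul_potential_empty_le
    _ = J.V.card * (3 ^ n * weight c n) := by ring
    _ ≤ J.V.card * ((c + 1) * 8 ^ n) := Nat.mul_le_mul_left _ (three_pow_mul_weight_le hc n)
    _ ≤ J.V.card * (2 * c * 8 ^ n) := Nat.mul_le_mul_left _ (Nat.mul_le_mul_right _ (by omega))
    _ = c * (2 * 8 ^ n * J.V.card) := by ring

lemma card_left_div_le (hc : 1 ≤ c) : (J.left.card : ℝ) / J.V.card ≤ 3 / (2 * c) := by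
  rcases (J.V.card).eq_zero_or_pos with h | h
  · rw [h, Nat.cast_zero, div_zero]
    positivity
  have : (2 * c * J.left.card : ℝ) ≤ 3 * J.V.card := by
    exact_mod_cast F.two_mul_mul_card_left_le
  rw [div_le_div_iff₀ (by positivity) (by positivity)]
  linarith

lemma one_sub_le_sL2_div (hc : 1 ≤ c) (hV : J.V.Nonempty) :
    1 - 2 * (8 / 9 : ℝ) ^ n ≤ (J.sL2 : ℝ) / J.V.card := by
  have hVpos : (0 : ℝ) < J.V.card := by exact_mod_cast hV.card_pos
  have hwin : (J.V.card : ℝ) ≤ J.sL2 + F.potential ∅ := by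
    exact_mod_cast F.card_V_le_sL2_add_potential hc
  have hpot : (9 ^ n * F.potential ∅ : ℝ) ≤ 2 * 8 ^ n * J.V.card := by
    exact_mod_cast F.pow_mul_potential_empty_le hc
  have hpot' : (F.potential ∅ : ℝ) ≤ 2 * (8 / 9) ^ n * J.V.card := by
    rw [div_pow, show 2 * (8 ^ n / 9 ^ n) * (J.V.card : ℝ) = 2 * 8 ^ n * J.V.card / 9 ^ n by ring,
      le_div_iff₀ (by positivity)]
    linarith
  rw [le_div_iff₀ hVpos]
  linarith

end FullForest

end Influence

open Influence Influence.Pos Finset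

/-- position can beat number: for every `ε > 0` there are `c ≥ 1` and `N`
such that for all `n ≥ N` the game `J^c_n` has a proportion of Left vertices at most `ε`
while Left, playing second, wins a proportion at least `1 − ε` of all vertices. -/
theorem influence_position_beats_number (ε : ℝ) (hε : 0 < ε) :
    ∃ c : ℕ, 1 ≤ c ∧ ∃ N : ℕ, ∀ n : ℕ, N ≤ n → ∀ J : Pos ℕ, IsJnc n c J →
      (J.left.card : ℝ) / (J.V.card : ℝ) ≤ ε ∧
      1 - ε ≤ (J.sL2 : ℝ) / (J.V.card : ℝ) := by
  obtain ⟨N, hN⟩ := exists_pow_lt_of_lt_one (half_pos hε) (by norm_num : (8 / 9 : ℝ) < 1)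
  have hc : 1 ≤ ⌈3 / ε⌉₊ := Nat.one_le_iff_ne_zero.2 (Nat.ceil_pos.2 (by positivity)).ne'
  refine ⟨⌈3 / ε⌉₊, hc, N, fun n hn J ⟨T₁, T₂, h₁, h₂, hdisj, hJ⟩ => ?_⟩
  subst hJ
  have F := h₁.toFullForest.union h₂.toFullForest hdisj
  constructor
  · have hcε : 3 / ε ≤ ⌈3 / ε⌉₊ := Nat.le_ceil _
    calc _ ≤ 3 / (2 * (⌈3 / ε⌉₊ : ℝ)) := F.card_left_div_le hc
      _ ≤ ε := by
        rw [div_le_iff₀ (by positivity)]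
        rw [div_le_iff₀ hε] at hcε
        linarith
  · have := pow_le_pow_of_le_one (by norm_num) (by norm_num) hn (a := (8 / 9 : ℝ))
    calc 1 - ε ≤ 1 - 2 * (8 / 9 : ℝ) ^ n := by linarith
      _ ≤ _ := F.one_sub_le_sL2_div hc (h₁.V_nonempty.mono subset_union_left)
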